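/- arXiv:math/0302208 — 5 statements merged into one kernel-verified Lean document; each statement's English description precedes it below -/
import Mathlib

section
/- Let r : ℝ → ℝ be the half-integer rounding (r(ξ) = ξ if ξ ∈ ℤ, r(ξ) = ⌊ξ⌋ + 1/2 otherwise). If h : ℝ → ℝ is strictly monotone increasing and satisfies h(y + 1) = h(y) + 1 for all y, then for all y₁, y₂ ∈ ℝ, r(h(y₂) − h(y₁)) = r(y₂ − y₁). -/
/-
Write `n = ⌊y₂ - y₁⌋`. Since `h` commutes with integer translations, strict monotonicity turns
`y₁ + n ≤ y₂ < y₁ + n + 1` into `h y₁ + n ≤ h y₂ < h y₁ + n + 1`, so both differences have the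
same integer part; and by injectivity one of them is an integer exactly when the other is.
Half-integer rounding depends on nothing else.
-/

open AddConstMap

section

variable {α : Type*} {h : α → α}

theorem map_add_intCast_of_map_add_one [AddGroupWithOne α] (hper : ∀ y, h (y + 1) = h y + 1)
    (y : α) (n : ℤ) : h (y + n) = h y + n :=
  AddConstMapClass.map_add_int (⟨h, hper⟩ : α →+c[1, 1] α) y n

theorem Function.Injective.map_sub_map_eq_intCast_iff [AddCommGroupWithOne α] (hinj : Injective h)
    (hper : ∀ y, h (y + 1) = h y + 1) (y₁ y₂ : α) (m : ℤ) :
    h y₂ - h y₁ = m ↔ y₂ - y₁ = m := by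
  rw [sub_eq_iff_eq_add', sub_eq_iff_eq_add', ← map_add_intCast_of_map_add_one hper,
    hinj.eq_iff]

theorem StrictMono.floor_map_sub_map [Ring α] [LinearOrder α] [IsStrictOrderedRing α]
    [FloorRing α] (hmono : StrictMono h) (hper : ∀ y, h (y + 1) = h y + 1) (y₁ y₂ : α) :
    ⌊h y₂ - h y₁⌋ = ⌊y₂ - y₁⌋ := by
  set n := ⌊y₂ - y₁⌋
  have hlo : y₁ + n ≤ y₂ := le_sub_iff_add_le'.mp (Int.floor_le _)
  have hhi : y₂ < y₁ + ↑(n + 1) := by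
    rw [Int.cast_add, Int.cast_one]
    exact sub_lt_iff_lt_add'.mp (Int.lt_floor_add_one _)
  have hlo' := hmono.monotone hlo
  have hhi' := hmono hhi
  rw [map_add_intCast_of_map_add_one hper] at hlo' hhi'
  rw [Int.cast_add, Int.cast_one] at hhi'
  exact Int.floor_eq_iff.mpr ⟨le_sub_iff_add_le'.mpr hlo', sub_lt_iff_lt_add'.mpr hhi'⟩

end

theorem stmt_2 (r : ℝ → ℝ)
    (hr_int : ∀ ξ : ℝ, (∃ n : ℤ, ξ = n) → r ξ = ξ)
    (hr_nint : ∀ ξ : ℝ, (¬ ∃ n : ℤ, ξ = n) → r ξ = ⌊ξ⌋ + 1/2)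
    (h : ℝ → ℝ) (hmono : StrictMono h)
    (hper : ∀ y : ℝ, h (y + 1) = h y + 1) :
    ∀ y₁ y₂ : ℝ, r (h y₂ - h y₁) = r (y₂ - y₁) := by
  intro y₁ y₂
  have hint_iff := hmono.injective.map_sub_map_eq_intCast_iff hper y₁ y₂
  by_cases hint : ∃ m : ℤ, y₂ - y₁ = m
  · obtain ⟨m, hm⟩ := hint
    have hdiff : h y₂ - h y₁ = m := (hint_iff m).mpr hm
    rw [hr_int _ ⟨m, hdiff⟩, hr_int _ ⟨m, hm⟩, hdiff, hm]
  · have hint' : ¬∃ m : ℤ, h y₂ - h y₁ = m := fun ⟨m, hm⟩ => hint ⟨m, (hint_iff m).mp hm⟩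
    rw [hr_nint _ hint', hr_nint _ hint, hmono.floor_map_sub_map hper]
end

section
/- Define tw : (ℝ × ℝ) → (ℝ × ℝ) → ℝ by tw((x₁,y₁),(x₂,y₂)) = r(y₂ − y₁) − r(x₂ − x₁), where r is the half-integer rounding. Then tw(b, a) = −tw(a, b) for all a, b, and for all a, b, c ∈ ℝ × ℝ, |tw(a, c) − tw(a, b) − tw(b, c)| ≤ 1. -/
theorem stmt_3 (r : ℝ → ℝ)
    (hr_int : ∀ ξ : ℝ, (∃ n : ℤ, ξ = n) → r ξ = ξ)
    (hr_nint : ∀ ξ : ℝ, (¬ ∃ n : ℤ, ξ = n) → r ξ = ⌊ξ⌋ + 1/2)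
    (tw : ℝ × ℝ → ℝ × ℝ → ℝ)
    (htw : ∀ p q : ℝ × ℝ, tw p q = r (q.2 - p.2) - r (q.1 - p.1)) :
    (∀ a b : ℝ × ℝ, tw b a = - tw a b) ∧
    (∀ a b c : ℝ × ℝ, |tw a c - tw a b - tw b c| ≤ 1) := by
  -- floor facts for non-integers
  have hflt : ∀ ξ : ℝ, (¬ ∃ n : ℤ, ξ = n) → (⌊ξ⌋ : ℝ) < ξ := by
    intro ξ h
    rcases lt_or_eq_of_le (Int.floor_le ξ) with h' | h'
    · exact h'
    · exact absurd ⟨⌊ξ⌋, h'.symm⟩ h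
  -- r(-ξ) = -r(ξ)
  have hodd : ∀ ξ : ℝ, r (-ξ) = - r ξ := by
    intro ξ
    by_cases h : ∃ n : ℤ, ξ = n
    · have h' : ∃ n : ℤ, -ξ = n := by
        obtain ⟨n, hn⟩ := h; exact ⟨-n, by push_cast [hn]; ring⟩
      rw [hr_int ξ h, hr_int (-ξ) h']
    · have h' : ¬ ∃ n : ℤ, -ξ = n := by
        intro ⟨n, hn⟩; exact h ⟨-n, by push_cast; linarith⟩
      have hfl : ⌊-ξ⌋ = -⌊ξ⌋ - 1 := by
        apply Int.floor_eq_iff.mpr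
        constructor
        · push_cast
          have := Int.lt_floor_add_one ξ
          linarith
        · push_cast
          have := hflt ξ h
          linarith
      rw [hr_nint ξ h, hr_nint (-ξ) h', hfl]
      push_cast
      ring
  -- key additivity lemma
  have key : ∀ s t : ℝ, |r (s + t) - r s - r t| ≤ 1/2 := by
    intro s t
    by_cases hs : ∃ n : ℤ, s = n
    · obtain ⟨n, hn⟩ := hs
      by_cases ht : ∃ m : ℤ, t = m
      · obtain ⟨m, hm⟩ := ht
        rw [hr_int s ⟨n, hn⟩, hr_int t ⟨m, hm⟩,
          hr_int (s + t) ⟨n + m, by push_cast [hn, hm]; ring⟩]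
        norm_num
      · have h' : ¬ ∃ m : ℤ, s + t = m := by
          intro ⟨m, hm⟩; exact ht ⟨m - n, by push_cast; linarith [hn, hm]⟩
        have hfl : ⌊s + t⌋ = n + ⌊t⌋ := by
          rw [hn, add_comm, Int.floor_add_intCast]; ring
        rw [hr_int s ⟨n, hn⟩, hr_nint t ht, hr_nint (s + t) h', hfl]
        push_cast
        rw [hn, abs_le]
        constructor <;> push_cast <;> linarith
    · by_cases ht : ∃ m : ℤ, t = m
      · obtain ⟨m, hm⟩ := ht
        have h' : ¬ ∃ k : ℤ, s + t = k := by
          intro ⟨k, hk⟩; exact hs ⟨k - m, by push_cast; linarith [hm, hk]⟩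
        have hfl : ⌊s + t⌋ = ⌊s⌋ + m := by
          rw [hm, Int.floor_add_intCast]
        rw [hr_int t ⟨m, hm⟩, hr_nint s hs, hr_nint (s + t) h', hfl]
        push_cast
        rw [hm, abs_le]
        constructor <;> push_cast <;> linarith
      · have h1 : (⌊s⌋ : ℝ) < s := hflt s hs
        have h2 : (⌊t⌋ : ℝ) < t := hflt t ht
        have h3 := Int.lt_floor_add_one s
        have h4 := Int.lt_floor_add_one t
        by_cases hst : ∃ k : ℤ, s + t = k
        · obtain ⟨k, hk⟩ := hst
          have hkeq : k = ⌊s⌋ + ⌊t⌋ + 1 := by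
            have hl : (⌊s⌋ + ⌊t⌋ : ℝ) < k := by rw [← hk]; push_cast; linarith
            have hu : (k : ℝ) < ⌊s⌋ + ⌊t⌋ + 2 := by rw [← hk]; push_cast; linarith
            have hl' : ⌊s⌋ + ⌊t⌋ < k := by exact_mod_cast (by push_cast; linarith : ((⌊s⌋ + ⌊t⌋ : ℤ) : ℝ) < k)
            have hu' : k < ⌊s⌋ + ⌊t⌋ + 2 := by exact_mod_cast (by push_cast; linarith : (k : ℝ) < ((⌊s⌋ + ⌊t⌋ + 2 : ℤ) : ℝ))
            omega
          rw [hr_int (s + t) ⟨k, hk⟩, hr_nint s hs, hr_nint t ht, hk, hkeq]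
          push_cast
          rw [abs_le]
          constructor <;> linarith
        · have hfl : ⌊s + t⌋ = ⌊s⌋ + ⌊t⌋ ∨ ⌊s + t⌋ = ⌊s⌋ + ⌊t⌋ + 1 := by
            have hl : (⌊s⌋ + ⌊t⌋ : ℝ) ≤ s + t := by push_cast; linarith
            have hu : s + t < (⌊s⌋ + ⌊t⌋ + 2 : ℝ) := by push_cast; linarith
            have hl' : ⌊s⌋ + ⌊t⌋ ≤ ⌊s + t⌋ := Int.le_floor.mpr (by exact_mod_cast hl)
            have hu' : ⌊s + t⌋ < ⌊s⌋ + ⌊t⌋ + 2 := by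
              have := Int.floor_le (s + t)
              have : (⌊s + t⌋ : ℝ) < (⌊s⌋ + ⌊t⌋ + 2 : ℤ) := by push_cast; linarith [Int.floor_le (s + t)]
              exact_mod_cast this
            omega
          rw [hr_nint s hs, hr_nint t ht, hr_nint (s + t) hst]
          rcases hfl with h | h <;> rw [h] <;> push_cast <;> rw [abs_le] <;> constructor <;> linarith
  constructor
  · intro a b
    rw [htw, htw]
    have e1 : a.2 - b.2 = -(b.2 - a.2) := by ring
    have e2 : a.1 - b.1 = -(b.1 - a.1) := by ring
    rw [e1, e2, hodd, hodd]
    ring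
  · intro a b c
    have e1 : c.2 - a.2 = (b.2 - a.2) + (c.2 - b.2) := by ring
    have e2 : c.1 - a.1 = (b.1 - a.1) + (c.1 - b.1) := by ring
    have k1 := key (b.2 - a.2) (c.2 - b.2)
    have k2 := key (b.1 - a.1) (c.1 - b.1)
    rw [htw, htw, htw, e1, e2]
    rw [abs_le] at k1 k2 ⊢
    constructor <;> linarith
end

section
/- Fix 0 < c ≤ 1. For every t with 0 < t ≤ c/2, one has arsinh(1 / sinh(t/2)) > arcosh(c / t). -/
/-- Inverse hyperbolic cosine: `arcosh x = log (x + √(x² − 1))` for `x ≥ 1`. -/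
noncomputable def arcosh (x : ℝ) : ℝ := Real.log (x + Real.sqrt (x ^ 2 - 1))

lemma sinh_le_two_mul {u : ℝ} (hu : 0 < u) (hu4 : u ≤ 1/4) : Real.sinh u ≤ 2 * u := by
  have h1 : (0:ℝ) < 1 - u := by linarith
  have he1 : 1 - u ≤ Real.exp (-u) := by
    have := Real.add_one_le_exp (-u); linarith
  have he2 : Real.exp u ≤ 1 / (1 - u) := by
    rw [le_div_iff₀ h1]
    have hpos := Real.exp_pos u
    have : (1 - u) * Real.exp u ≤ Real.exp (-u) * Real.exp u := by nlinarith
    rw [← Real.exp_add, neg_add_cancel, Real.exp_zero] at this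
    nlinarith
  have hsinh : Real.sinh u = (Real.exp u - Real.exp (-u)) / 2 := Real.sinh_eq u
  have : Real.sinh u ≤ (1 / (1 - u) - (1 - u)) / 2 := by
    rw [hsinh]; linarith
  have hval : (1 / (1 - u) - (1 - u)) / 2 ≤ 2 * u := by
    rw [div_le_iff₀ (by norm_num : (0:ℝ) < 2), sub_le_iff_le_add, div_le_iff₀ h1]
    nlinarith
  linarith

theorem stmt_4 (c : ℝ) (hc0 : 0 < c) (hc1 : c ≤ 1) :
    ∀ t : ℝ, 0 < t → t ≤ c / 2 →
      arcosh (c / t) < Real.arsinh (1 / Real.sinh (t / 2)) := by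
  intro t ht htc
  set x := c / t with hx
  set y := 1 / Real.sinh (t / 2) with hy
  have hu : 0 < t / 2 := by linarith
  have hsinhpos : 0 < Real.sinh (t / 2) := Real.sinh_pos_iff.mpr hu
  have hu4 : t / 2 ≤ 1/4 := by linarith
  have hsinh_le : Real.sinh (t / 2) ≤ t := by
    have := sinh_le_two_mul hu hu4; linarith
  have hxy : x ≤ y := by
    rw [hx, hy, div_le_div_iff₀ ht hsinhpos]
    have : Real.sinh (t / 2) ≤ t / c := by
      calc Real.sinh (t / 2) ≤ t := hsinh_le
        _ ≤ t / c := by rw [le_div_iff₀ hc0]; nlinarith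
    nlinarith
  have hx2 : 2 ≤ x := by
    rw [hx, le_div_iff₀ ht]; linarith
  have hxpos : 0 < x + Real.sqrt (x ^ 2 - 1) := by
    have := Real.sqrt_nonneg (x ^ 2 - 1); linarith
  have hsqrt : Real.sqrt (x ^ 2 - 1) < Real.sqrt (1 + y ^ 2) := by
    apply Real.sqrt_lt_sqrt (by nlinarith) (by nlinarith)
  unfold arcosh Real.arsinh
  exact Real.log_lt_log hxpos (by linarith)
end

section
/- For r > 0 define Φ_r : ℂ → ℂ by Φ_r(x + iy) = x·cosh r + i·y·sinh r. Given t > 0 and ω ∈ ℂ with Im ω > 0, there exists a unique pair (λ, r) with r > 0 and Re λ > 0 such that 2π·sinh r = t·|ω| and Φ_r(λ) = 2πi·sinh(r)/ω. -/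
/-!
The equation `2π sinh r = t‖ω‖` alone determines `r > 0`, since `sinh` is an increasing bijection
of `ℝ` with `sinh 0 = 0`. For `r ≠ 0` the map `Φ_r` is a real diagonal linear automorphism of
`ℂ ≅ ℝ²`, so `λ` is then determined by `Φ_r(λ) = 2πi sinh r / ω`, and
`Re λ = Re (2πi sinh r / ω) / cosh r = 2π sinh r · Im ω / (|ω|² cosh r) > 0`.
-/

open Complex

/-- The paper's `Φ_r(x + iy) = x cosh r + i y sinh r`. -/
noncomputable def tubeProj (r : ℝ) (z : ℂ) : ℂ := ⟨z.re * Real.cosh r, z.im * Real.sinh r⟩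

lemma tubeProj_apply (r : ℝ) (z : ℂ) :
    tubeProj r z = ((z.re * Real.cosh r : ℝ) : ℂ) + ((z.im * Real.sinh r : ℝ) : ℂ) * I :=
  mk_eq_add_mul_I _ _

lemma tubeProj_eq_iff {r : ℝ} (hr : r ≠ 0) {z w : ℂ} :
    tubeProj r z = w ↔ z = ⟨w.re / Real.cosh r, w.im / Real.sinh r⟩ := by
  have hcosh : Real.cosh r ≠ 0 := (Real.cosh_pos r).ne'
  have hsinh : Real.sinh r ≠ 0 := Real.sinh_ne_zero.mpr hr
  simp only [tubeProj, Complex.ext_iff, eq_div_iff hcosh, eq_div_iff hsinh]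

lemma existsUnique_pos_mul_sinh_eq {c a : ℝ} (hc : 0 < c) (ha : 0 < a) :
    ∃! r : ℝ, 0 < r ∧ c * Real.sinh r = a := by
  refine ⟨Real.arsinh (a / c), ⟨Real.arsinh_pos_iff.mpr (by positivity), ?_⟩, ?_⟩
  · rw [Real.sinh_arsinh, mul_div_cancel₀ _ hc.ne']
  · rintro r ⟨-, hr⟩
    rw [← hr, mul_div_cancel_left₀ _ hc.ne', Real.arsinh_sinh]

lemma re_ofReal_mul_I_div_pos {c : ℝ} (hc : 0 < c) {ω : ℂ} (hω : 0 < ω.im) :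
    0 < ((c : ℂ) * I / ω).re := by
  have hnormSq : 0 < normSq ω := normSq_pos.mpr fun h => by simp [h] at hω
  have hre : ((c : ℂ) * I / ω).re = c * ω.im / normSq ω := by
    simp [div_re]
  rw [hre]
  positivity

theorem stmt_7 (t : ℝ) (ht : 0 < t) (ω : ℂ) (hω : 0 < ω.im) :
    ∃! p : ℂ × ℝ, 0 < p.2 ∧ 0 < p.1.re ∧
      2 * Real.pi * Real.sinh p.2 = t * ‖ω‖ ∧
      ((p.1.re * Real.cosh p.2 : ℝ) : ℂ) + ((p.1.im * Real.sinh p.2 : ℝ) : ℂ) * Complex.I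
        = 2 * Real.pi * Complex.I * (Real.sinh p.2 : ℝ) / ω := by
  have hω0 : ω ≠ 0 := fun h => by simp [h] at hω
  obtain ⟨r, ⟨hr, hsinh⟩, hr_unique⟩ :=
    existsUnique_pos_mul_sinh_eq (by positivity : 0 < 2 * Real.pi)
      (mul_pos ht (norm_pos_iff.mpr hω0))
  set w : ℂ := 2 * Real.pi * I * (Real.sinh r : ℝ) / ω
  have hw_re : 0 < w.re := by
    have hsinh_pos : 0 < Real.sinh r := Real.sinh_pos_iff.mpr hr
    have := re_ofReal_mul_I_div_pos (by positivity : 0 < 2 * Real.pi * Real.sinh r) hω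
    convert this using 3
    push_cast
    ring
  refine ⟨(⟨w.re / Real.cosh r, w.im / Real.sinh r⟩, r),
    ⟨hr, div_pos hw_re (Real.cosh_pos r), hsinh, ?_⟩, ?_⟩
  · rw [← tubeProj_apply, tubeProj_eq_iff hr.ne']
  · rintro ⟨z, r'⟩ ⟨hr', -, hsinh', hz⟩
    obtain rfl := hr_unique r' ⟨hr', hsinh'⟩
    rw [← tubeProj_apply, tubeProj_eq_iff hr.ne'] at hz
    exact Prod.ext hz rfl
end

section
/- Let X be a geodesic metric space all of whose geodesic triangles are δ-thin (each side is contained in the δ-neighborhood of the union of the other two sides). Let Y ⊆ X and let Π : X → Y satisfy: (Q1) d(x, x') ≤ 1 implies d(Π(x), Π(x')) ≤ C, and (Q2) for y ∈ Y, d(y, Π(y)) ≤ C. Then for every a ≥ 0 there exists b = b(a, δ, C) such that for any geodesic segment g in X whose endpoints lie within distance a of Y, every point x on g satisfies d(x, Π(x)) ≤ b. -/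
/-- `γ` is a geodesic segment from `x` to `y`, parametrized by arclength on
`[0, dist x y]`. -/
def IsGeodesicSegment {X : Type*} [MetricSpace X] (γ : ℝ → X) (x y : X) : Prop :=
  γ 0 = x ∧ γ (dist x y) = y ∧
    ∀ s ∈ Set.Icc (0 : ℝ) (dist x y), ∀ t ∈ Set.Icc (0 : ℝ) (dist x y),
      dist (γ s) (γ t) = |s - t|

/-- All geodesic triangles are δ-thin: each side lies in the δ-neighborhood of the
union of the other two sides. -/
def ThinTriangles (X : Type*) [MetricSpace X] (δ : ℝ) : Prop :=
  ∀ x y z : X, ∀ g₁ g₂ g₃ : ℝ → X,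
    IsGeodesicSegment g₁ x y → IsGeodesicSegment g₂ y z → IsGeodesicSegment g₃ x z →
    ∀ s ∈ Set.Icc (0 : ℝ) (dist x z),
      Metric.infDist (g₃ s)
        (g₁ '' Set.Icc (0 : ℝ) (dist x y) ∪ g₂ '' Set.Icc (0 : ℝ) (dist y z)) ≤ δ

/-!
Let `g s₀` be a point of a geodesic `g` with ends in `Y` at maximal distance `R` from `Y`. Then `P`
moves every point of `g` by at most `F = O(R)`, so the ends `a`, `d` of the subsegment of `g` of
radius `F` around `g s₀` satisfy `d(a, P a) ≤ d(g s₀, a) + C`, and likewise for `d`. By thinness,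
`g s₀` is `2δ`-close to the path `a → P a → P d → d`. Near an outer side this forces
`R ≤ 4δ + C`; the middle side stays within `δ k + C` of the `P`-image, which lies in `Y`, of a
chain of `n ≤ 2 ^ k` unit steps with `n = O(R)`. Hence `R ≤ δ log₂ O(R) + O(1)`, which bounds `R`.
Two more thin triangles pass from ends in `Y` to ends near `Y`, and coarse Lipschitzness turns
distance to `Y` into distance to the projection.
-/

open Metric Set

section

variable {X : Type*} [MetricSpace X]

namespace IsGeodesicSegment

variable {γ : ℝ → X} {x y : X}

theorem dist_eq (hγ : IsGeodesicSegment γ x y) {s t : ℝ} (hs : s ∈ Icc 0 (dist x y))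
    (ht : t ∈ Icc 0 (dist x y)) : dist (γ s) (γ t) = |s - t| :=
  hγ.2.2 s hs t ht

theorem dist_left (hγ : IsGeodesicSegment γ x y) {s : ℝ} (hs : s ∈ Icc 0 (dist x y)) :
    dist x (γ s) = s := by
  rw [← hγ.1, hγ.dist_eq ⟨le_rfl, dist_nonneg⟩ hs, zero_sub, abs_neg, abs_of_nonneg hs.1]

theorem dist_right (hγ : IsGeodesicSegment γ x y) {s : ℝ} (hs : s ∈ Icc 0 (dist x y)) :
    dist (γ s) y = dist x y - s := by
  conv_lhs => rw [← hγ.2.1]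
  rw [hγ.dist_eq hs ⟨dist_nonneg, le_rfl⟩, abs_of_nonpos (by linarith [hs.2]), neg_sub]

theorem dist_add_dist_of_mem_image (hγ : IsGeodesicSegment γ x y) {w : X}
    (hw : w ∈ γ '' Icc 0 (dist x y)) : dist x w + dist w y = dist x y := by
  obtain ⟨s, hs, rfl⟩ := hw
  rw [hγ.dist_left hs, hγ.dist_right hs]
  ring

theorem infDist_le_of_left_mem (hγ : IsGeodesicSegment γ x y) {S : Set X} (hx : x ∈ S) {s : ℝ}
    (hs : s ∈ Icc 0 (dist x y)) : infDist (γ s) S ≤ dist x y := by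
  calc infDist (γ s) S ≤ dist (γ s) x := infDist_le_dist_of_mem hx
    _ ≤ dist x y := by rw [dist_comm, hγ.dist_left hs]; exact hs.2

theorem infDist_le_of_right_mem (hγ : IsGeodesicSegment γ x y) {S : Set X} (hy : y ∈ S) {s : ℝ}
    (hs : s ∈ Icc 0 (dist x y)) : infDist (γ s) S ≤ dist x y := by
  calc infDist (γ s) S ≤ dist (γ s) y := infDist_le_dist_of_mem hy
    _ ≤ dist x y := by rw [hγ.dist_right hs]; linarith [hs.1]

theorem lipschitzOnWith (hγ : IsGeodesicSegment γ x y) :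
    LipschitzOnWith 1 γ (Icc 0 (dist x y)) :=
  LipschitzOnWith.of_dist_le_mul fun s hs t ht => by
    rw [hγ.dist_eq hs ht, Real.dist_eq, NNReal.coe_one, one_mul]

theorem isCompact_image (hγ : IsGeodesicSegment γ x y) : IsCompact (γ '' Icc 0 (dist x y)) :=
  isCompact_Icc.image_of_continuousOn hγ.lipschitzOnWith.continuousOn

theorem restrict (hγ : IsGeodesicSegment γ x y) {a b : ℝ} (ha : a ∈ Icc 0 (dist x y))
    (hb : b ∈ Icc 0 (dist x y)) (hab : a ≤ b) :
    IsGeodesicSegment (fun τ => γ (a + τ)) (γ a) (γ b) := by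
  have hd : dist (γ a) (γ b) = b - a := by
    rw [hγ.dist_eq ha hb, abs_sub_comm, abs_of_nonneg (by linarith)]
  refine ⟨by simp, by simp [hd], fun s hs t ht => ?_⟩
  rw [hd] at hs ht
  rw [hγ.dist_eq ⟨by linarith [ha.1, hs.1], by linarith [hb.2, hs.2]⟩
    ⟨by linarith [ha.1, ht.1], by linarith [hb.2, ht.2]⟩, add_sub_add_left_eq_sub]

theorem exists_chain (hγ : IsGeodesicSegment γ x y) :
    ∃ p : ℕ → X, p 0 = x ∧ p ⌈dist x y⌉₊ = y ∧ ∀ i, dist (p i) (p (i + 1)) ≤ 1 := by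
  have hmem : ∀ i : ℕ, min (i : ℝ) (dist x y) ∈ Icc 0 (dist x y) := fun i =>
    ⟨le_min i.cast_nonneg dist_nonneg, min_le_right _ _⟩
  refine ⟨fun i => γ (min (i : ℝ) (dist x y)), ?_, ?_, fun i => ?_⟩
  · simpa using hγ.1
  · simpa [min_eq_right (Nat.le_ceil (dist x y))] using hγ.2.1
  · rw [hγ.dist_eq (hmem i) (hmem (i + 1))]
    refine (abs_min_sub_min_le_max _ _ _ _).trans ?_
    simp

end IsGeodesicSegment

namespace ThinTriangles

variable {δ : ℝ}

theorem exists_dist_le (hthin : ThinTriangles X δ) {x y z : X} {g₁ g₂ g₃ : ℝ → X}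
    (h₁ : IsGeodesicSegment g₁ x y) (h₂ : IsGeodesicSegment g₂ y z)
    (h₃ : IsGeodesicSegment g₃ x z) {s : ℝ} (hs : s ∈ Icc 0 (dist x z)) :
    ∃ w ∈ g₁ '' Icc 0 (dist x y) ∪ g₂ '' Icc 0 (dist y z), dist (g₃ s) w ≤ δ := by
  obtain ⟨w, hw, hd⟩ := (h₁.isCompact_image.union h₂.isCompact_image).exists_infDist_eq_dist
    ⟨x, Or.inl ⟨0, ⟨le_rfl, dist_nonneg⟩, h₁.1⟩⟩ (g₃ s)
  exact ⟨w, hw, hd ▸ hthin x y z g₁ g₂ g₃ h₁ h₂ h₃ s hs⟩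

theorem infDist_le_add (hthin : ThinTriangles X δ) {x y z : X} {g₁ g₂ g₃ : ℝ → X}
    (h₁ : IsGeodesicSegment g₁ x y) (h₂ : IsGeodesicSegment g₂ y z)
    (h₃ : IsGeodesicSegment g₃ x z) {S : Set X} {r : ℝ}
    (hr₁ : ∀ t ∈ Icc 0 (dist x y), infDist (g₁ t) S ≤ r)
    (hr₂ : ∀ t ∈ Icc 0 (dist y z), infDist (g₂ t) S ≤ r) {s : ℝ} (hs : s ∈ Icc 0 (dist x z)) :
    infDist (g₃ s) S ≤ r + δ := by
  obtain ⟨w, hw, hd⟩ := hthin.exists_dist_le h₁ h₂ h₃ hs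
  have hwS : infDist w S ≤ r := by
    rcases hw with ⟨t, ht, rfl⟩ | ⟨t, ht, rfl⟩
    exacts [hr₁ t ht, hr₂ t ht]
  linarith [infDist_le_infDist_add_dist (x := g₃ s) (y := w) (s := S)]

theorem exists_dist_le_of_quadrilateral (hδ : 0 ≤ δ)
    (hgeo : ∀ x y : X, ∃ γ : ℝ → X, IsGeodesicSegment γ x y) (hthin : ThinTriangles X δ)
    {a b c d : X} {σ₁ σ₂ σ₃ γ : ℝ → X} (h₁ : IsGeodesicSegment σ₁ a b)
    (h₂ : IsGeodesicSegment σ₂ b c) (h₃ : IsGeodesicSegment σ₃ c d)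
    (hγ : IsGeodesicSegment γ a d) {s : ℝ} (hs : s ∈ Icc 0 (dist a d)) :
    ∃ w ∈ σ₁ '' Icc 0 (dist a b) ∪ σ₂ '' Icc 0 (dist b c) ∪ σ₃ '' Icc 0 (dist c d),
      dist (γ s) w ≤ 2 * δ := by
  obtain ⟨τ, hτ⟩ := hgeo a c
  obtain ⟨w, hw | hw, hdw⟩ := hthin.exists_dist_le hτ h₃ hγ hs
  · obtain ⟨t, ht, rfl⟩ := hw
    obtain ⟨w', hw', hdw'⟩ := hthin.exists_dist_le h₁ h₂ hτ ht
    exact ⟨w', Or.inl hw', by linarith [dist_triangle (γ s) (τ t) w']⟩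
  · exact ⟨w, Or.inr hw, by linarith⟩

theorem exists_dist_chain_le (hgeo : ∀ x y : X, ∃ γ : ℝ → X, IsGeodesicSegment γ x y)
    (hthin : ThinTriangles X δ) {K : ℝ} (hK : 0 ≤ K) (k : ℕ) :
    ∀ n ≤ 2 ^ k, ∀ p : ℕ → X, (∀ i < n, dist (p i) (p (i + 1)) ≤ K) →
      ∀ γ : ℝ → X, IsGeodesicSegment γ (p 0) (p n) →
        ∀ s ∈ Icc 0 (dist (p 0) (p n)), ∃ i ≤ n, dist (γ s) (p i) ≤ δ * k + K := by
  induction k with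
  | zero =>
    intro n hn p hp γ hγ s hs
    have hK' : dist (p 0) (p n) ≤ K := by
      interval_cases n
      · simpa using hK
      · exact hp 0 one_pos
    refine ⟨0, n.zero_le, ?_⟩
    rw [dist_comm, hγ.dist_left hs]
    simpa using hs.2.trans hK'
  | succ k ih =>
    intro n hn p hp γ hγ s hs
    set m := min n (2 ^ k)
    have hmn : m + (n - m) = n := by omega
    obtain ⟨γ₁, h₁⟩ := hgeo (p 0) (p m)
    obtain ⟨γ₂, h₂⟩ := hgeo (p m) (p n)
    obtain ⟨w, hw, hdw⟩ := hthin.exists_dist_le h₁ h₂ hγ hs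
    suffices ∃ i ≤ n, dist w (p i) ≤ δ * k + K by
      obtain ⟨i, hi, hd⟩ := this
      refine ⟨i, hi, ?_⟩
      push_cast
      linarith [dist_triangle (γ s) w (p i)]
    rcases hw with ⟨t, ht, rfl⟩ | ⟨t, ht, rfl⟩
    · obtain ⟨i, hi, hd⟩ := ih m (min_le_right _ _) p (fun i hi => hp i (by omega)) γ₁ h₁ t ht
      exact ⟨i, hi.trans (min_le_left _ _), hd⟩
    · have h₂' : IsGeodesicSegment γ₂ (p (m + 0)) (p (m + (n - m))) := by rwa [add_zero, hmn]
      obtain ⟨i, hi, hd⟩ := ih (n - m) (by omega) (fun i => p (m + i))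
        (fun i hi => hp (m + i) (by omega)) γ₂ h₂' t (by rwa [add_zero, hmn])
      exact ⟨m + i, by omega, hd⟩

theorem exists_dist_apply_le (hgeo : ∀ x y : X, ∃ γ : ℝ → X, IsGeodesicSegment γ x y)
    (hthin : ThinTriangles X δ) {f : X → X} {C : ℝ} (hC : 0 ≤ C)
    (hf : ∀ x x' : X, dist x x' ≤ 1 → dist (f x) (f x') ≤ C) {a b : X} {k : ℕ}
    (hk : ⌈dist a b⌉₊ ≤ 2 ^ k) {σ : ℝ → X} (hσ : IsGeodesicSegment σ (f a) (f b)) {s : ℝ}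
    (hs : s ∈ Icc 0 (dist (f a) (f b))) : ∃ x, dist (σ s) (f x) ≤ δ * k + C := by
  obtain ⟨γ, hγ⟩ := hgeo a b
  obtain ⟨p, h0, hn, hp⟩ := hγ.exists_chain
  have hσ' : IsGeodesicSegment σ (f (p 0)) (f (p ⌈dist a b⌉₊)) := by rwa [h0, hn]
  obtain ⟨i, -, hi⟩ := hthin.exists_dist_chain_le hgeo hC k _ hk (f ∘ p)
    (fun i _ => hf _ _ (hp i)) σ hσ' s (by rwa [Function.comp_apply, Function.comp_apply, h0, hn])
  exact ⟨p i, hi⟩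

end ThinTriangles

theorem dist_le_of_coarseLipschitz (hgeo : ∀ x y : X, ∃ γ : ℝ → X, IsGeodesicSegment γ x y)
    {Z : Type*} [PseudoMetricSpace Z] {f : X → Z} {C : ℝ} (hC : 0 ≤ C)
    (hf : ∀ x x' : X, dist x x' ≤ 1 → dist (f x) (f x') ≤ C) (x y : X) :
    dist (f x) (f y) ≤ C * (dist x y + 1) := by
  obtain ⟨γ, hγ⟩ := hgeo x y
  obtain ⟨p, h0, hn, hp⟩ := hγ.exists_chain
  calc dist (f x) (f y) = dist (f (p 0)) (f (p ⌈dist x y⌉₊)) := by rw [h0, hn]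
    _ ≤ ∑ i ∈ Finset.range ⌈dist x y⌉₊, dist (f (p i)) (f (p (i + 1))) :=
      dist_le_range_sum_dist (f ∘ p) _
    _ ≤ ⌈dist x y⌉₊ * C := by
      simpa using Finset.sum_le_card_nsmul (Finset.range _) _ C fun i _ => hf _ _ (hp i)
    _ ≤ C * (dist x y + 1) := by
      rw [mul_comm]
      exact mul_le_mul_of_nonneg_left (Nat.ceil_lt_add_one dist_nonneg).le hC

theorem dist_proj_le (hgeo : ∀ x y : X, ∃ γ : ℝ → X, IsGeodesicSegment γ x y) {C : ℝ}
    (hC : 0 ≤ C) {Y : Set X} (hY : Y.Nonempty) {P : X → X}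
    (hQ1 : ∀ x x' : X, dist x x' ≤ 1 → dist (P x) (P x') ≤ C)
    (hQ2 : ∀ y ∈ Y, dist y (P y) ≤ C) (w : X) :
    dist w (P w) ≤ (C + 1) * (infDist w Y + 1) + 2 * C := by
  obtain ⟨q, hq, hwq⟩ := (infDist_lt_iff hY).mp (lt_add_one (infDist w Y))
  have hPq := dist_le_of_coarseLipschitz hgeo hC hQ1 q w
  rw [dist_comm q] at hPq
  calc dist w (P w) ≤ dist w q + dist q (P q) + dist (P q) (P w) := dist_triangle4 _ _ _ _
    _ ≤ (infDist w Y + 1) + C + C * ((infDist w Y + 1) + 1) := by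
      gcongr
      exacts [hQ2 q hq, hPq.trans (by gcongr)]
    _ = (C + 1) * (infDist w Y + 1) + 2 * C := by ring

/-- `R ≤ δ log₂ (A (R + 1)) + c` forces `R` to be bounded; the logarithm is encoded through
`2 ^ k`. -/
theorem exists_bound_of_le_log {δ A c : ℝ} (hδ : 0 ≤ δ) (hA : 0 ≤ A) :
    ∃ b, ∀ R : ℝ, 0 ≤ R → (∀ k : ℕ, A * (R + 1) ≤ 2 ^ k → R ≤ δ * k + c) → R ≤ b := by
  obtain ⟨j, hj⟩ := pow_unbounded_of_one_lt (2 * δ * A) (one_lt_two (α := ℝ))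
  refine ⟨2 * (δ * (j + 1) + c) + 1, fun R hR H => ?_⟩
  have h2j : (0 : ℝ) < 2 ^ j := by positivity
  set m := ⌈A * (R + 1) / 2 ^ j⌉₊
  -- `k = j + m` is admissible since `m ≤ 2 ^ m`, and grows in `R` with slope `A / 2 ^ j ≤ 1 / (2δ)`
  have hk : A * (R + 1) ≤ 2 ^ (j + m) :=
    calc A * (R + 1) ≤ 2 ^ j * m := by rw [← div_le_iff₀' h2j]; exact Nat.le_ceil _
      _ ≤ 2 ^ j * 2 ^ m := by gcongr; exact_mod_cast Nat.lt_two_pow_self.le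
      _ = 2 ^ (j + m) := (pow_add _ _ _).symm
  have hm : (m : ℝ) < A * (R + 1) / 2 ^ j + 1 := Nat.ceil_lt_add_one (by positivity)
  have hδm : δ * (A * (R + 1) / 2 ^ j) ≤ (R + 1) / 2 := by
    rw [mul_div_assoc', div_le_div_iff₀ h2j two_pos]
    nlinarith
  have hR' := H (j + m) hk
  push_cast at hR'
  nlinarith

theorem infDist_le_of_dist_add_dist_eq {Y : Set X} {z a b w : X} {ε C : ℝ} (hb : b ∈ Y)
    (hab : dist a b ≤ dist z a + C) (hw : dist a w + dist w b = dist a b)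
    (hzw : dist z w ≤ ε) : infDist z Y ≤ 2 * ε + C := by
  linarith [infDist_le_dist_of_mem (x := z) hb, dist_triangle z w b, dist_triangle z w a,
    dist_comm w a]

/-- Compare the geodesic from `a` to `d` with the path `a → P a ⇝ P d → d`, whose middle part is
the `P`-image of a chain along a geodesic from `a` to `d`. -/
theorem infDist_le_of_dist_proj_le {δ C : ℝ} (hδ : 0 ≤ δ) (hC : 0 ≤ C)
    (hgeo : ∀ x y : X, ∃ γ : ℝ → X, IsGeodesicSegment γ x y) (hthin : ThinTriangles X δ)
    {Y : Set X} {P : X → X} (hPY : ∀ x, P x ∈ Y)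
    (hQ1 : ∀ x x' : X, dist x x' ≤ 1 → dist (P x) (P x') ≤ C) {a d : X} {γ : ℝ → X}
    (hγ : IsGeodesicSegment γ a d) {k : ℕ} (hk : ⌈dist a d⌉₊ ≤ 2 ^ k) {s : ℝ}
    (hs : s ∈ Icc 0 (dist a d)) (ha : dist a (P a) ≤ dist (γ s) a + C)
    (hd : dist d (P d) ≤ dist (γ s) d + C) :
    infDist (γ s) Y ≤ δ * k + (4 * δ + C) := by
  obtain ⟨σ₁, h₁⟩ := hgeo a (P a)
  obtain ⟨σ₂, h₂⟩ := hgeo (P a) (P d)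
  obtain ⟨σ₃, h₃⟩ := hgeo (P d) d
  obtain ⟨w, hw, hdw⟩ := hthin.exists_dist_le_of_quadrilateral hδ hgeo h₁ h₂ h₃ hγ hs
  have hδk : 0 ≤ δ * k := by positivity
  rcases hw with (hw | ⟨t, ht, rfl⟩) | hw
  · linarith [infDist_le_of_dist_add_dist_eq (hPY _) ha (h₁.dist_add_dist_of_mem_image hw) hdw]
  · obtain ⟨x, hx⟩ := hthin.exists_dist_apply_le hgeo hC hQ1 hk h₂ ht
    linarith [infDist_le_dist_of_mem (x := γ s) (hPY x), dist_triangle (γ s) (σ₂ t) (P x)]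
  · have hw' := h₃.dist_add_dist_of_mem_image hw
    rw [add_comm, dist_comm w, dist_comm (P d) w, dist_comm (P d)] at hw'
    linarith [infDist_le_of_dist_add_dist_eq (hPY _) hd hw' hdw]

/-- Maximality of `g s₀` bounds `d(g t, P (g t))` by `F` along all of `g`, so the ends of the window
of radius `F` around `s₀` satisfy the hypotheses of `infDist_le_of_dist_proj_le`. -/
theorem infDist_le_of_isMaxOn {δ C : ℝ} (hδ : 0 ≤ δ) (hC : 0 ≤ C)
    (hgeo : ∀ x y : X, ∃ γ : ℝ → X, IsGeodesicSegment γ x y) (hthin : ThinTriangles X δ)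
    {Y : Set X} {P : X → X} (hPY : ∀ x, P x ∈ Y)
    (hQ1 : ∀ x x' : X, dist x x' ≤ 1 → dist (P x) (P x') ≤ C)
    (hQ2 : ∀ y ∈ Y, dist y (P y) ≤ C) {u v : X} (hu : u ∈ Y) (hv : v ∈ Y) {g : ℝ → X}
    (hg : IsGeodesicSegment g u v) {s₀ : ℝ} (hs₀ : s₀ ∈ Icc 0 (dist u v))
    (hmax : IsMaxOn (fun t => infDist (g t) Y) (Icc 0 (dist u v)) s₀) {k : ℕ}
    (hk : 2 * ((C + 1) * (infDist (g s₀) Y + 1) + 2 * C) ≤ 2 ^ k) :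
    infDist (g s₀) Y ≤ δ * k + (4 * δ + C) := by
  set F := (C + 1) * (infDist (g s₀) Y + 1) + 2 * C
  have hF : 0 ≤ F := by have := infDist_nonneg (x := g s₀) (s := Y); positivity
  have hend : ∀ t ∈ Icc 0 (dist u v), (g t ∈ Y ∨ F ≤ |s₀ - t|) →
      dist (g t) (P (g t)) ≤ dist (g s₀) (g t) + C := by
    rintro t ht (hY | hfar)
    · linarith [hQ2 _ hY, dist_nonneg (x := g s₀) (y := g t)]
    · have hRt : infDist (g t) Y ≤ infDist (g s₀) Y := hmax ht
      rw [hg.dist_eq hs₀ ht]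
      nlinarith [dist_proj_le hgeo hC ⟨u, hu⟩ hQ1 hQ2 (g t)]
  set tm := max 0 (s₀ - F) with htm_def
  set tp := min (dist u v) (s₀ + F) with htp_def
  have htm : tm ∈ Icc 0 (dist u v) :=
    ⟨le_max_left _ _, max_le dist_nonneg (by linarith [hs₀.2])⟩
  have htp : tp ∈ Icc 0 (dist u v) :=
    ⟨le_min dist_nonneg (by linarith [hs₀.1]), min_le_left _ _⟩
  have htms : tm ≤ s₀ := max_le hs₀.1 (by linarith)
  have hstp : s₀ ≤ tp := le_min hs₀.2 (by linarith)
  have hdtt : dist (g tm) (g tp) = tp - tm := by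
    rw [hg.dist_eq htm htp, abs_sub_comm, abs_of_nonneg (by linarith)]
  have hk' : ⌈dist (g tm) (g tp)⌉₊ ≤ 2 ^ k := by
    rw [Nat.ceil_le, hdtt]
    push_cast
    linarith [min_le_right (dist u v) (s₀ + F), le_max_right 0 (s₀ - F)]
  have h := infDist_le_of_dist_proj_le hδ hC hgeo hthin hPY hQ1
    (hg.restrict htm htp (htms.trans hstp)) hk' (s := s₀ - tm)
    (by rw [hdtt]; constructor <;> linarith)
  simp only [add_sub_cancel] at h
  refine h (hend tm htm ?_) (hend tp htp ?_)
  · rcases max_cases 0 (s₀ - F) with ⟨h, -⟩ | ⟨h, -⟩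
    · left; rw [htm_def, h, hg.1]; exact hu
    · right; rw [htm_def, h, sub_sub_cancel, abs_of_nonneg hF]
  · rcases min_cases (dist u v) (s₀ + F) with ⟨h, -⟩ | ⟨h, -⟩
    · left; rw [htp_def, h, hg.2.1]; exact hv
    · right; rw [htp_def, h, sub_add_cancel_left, abs_neg, abs_of_nonneg hF]

theorem exists_infDist_le_of_mem {δ C : ℝ} (hδ : 0 ≤ δ) (hC : 0 ≤ C)
    (hgeo : ∀ x y : X, ∃ γ : ℝ → X, IsGeodesicSegment γ x y) (hthin : ThinTriangles X δ)
    {Y : Set X} {P : X → X} (hPY : ∀ x, P x ∈ Y)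
    (hQ1 : ∀ x x' : X, dist x x' ≤ 1 → dist (P x) (P x') ≤ C)
    (hQ2 : ∀ y ∈ Y, dist y (P y) ≤ C) :
    ∃ b, ∀ u ∈ Y, ∀ v ∈ Y, ∀ g : ℝ → X, IsGeodesicSegment g u v →
      ∀ s ∈ Icc 0 (dist u v), infDist (g s) Y ≤ b := by
  obtain ⟨b, hb⟩ := exists_bound_of_le_log (A := 6 * C + 2) (c := 4 * δ + C) hδ (by positivity)
  refine ⟨b, fun u hu v hv g hg s hs => ?_⟩
  obtain ⟨s₀, hs₀, hmax⟩ := isCompact_Icc.exists_isMaxOn ⟨s, hs⟩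
    ((continuous_infDist_pt Y).comp_continuousOn hg.lipschitzOnWith.continuousOn)
  refine (hmax hs).trans (hb _ infDist_nonneg fun k hk => ?_)
  refine infDist_le_of_isMaxOn hδ hC hgeo hthin hPY hQ1 hQ2 hu hv hg hs₀ hmax (le_trans ?_ hk)
  nlinarith [infDist_nonneg (x := g s₀) (s := Y)]

theorem infDist_le_of_endpoints {δ : ℝ} (hδ : 0 ≤ δ)
    (hgeo : ∀ x y : X, ∃ γ : ℝ → X, IsGeodesicSegment γ x y) (hthin : ThinTriangles X δ)
    {Y : Set X} (hY : Y.Nonempty) {b₀ : ℝ}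
    (hb₀ : ∀ u ∈ Y, ∀ v ∈ Y, ∀ g : ℝ → X, IsGeodesicSegment g u v →
      ∀ s ∈ Icc 0 (dist u v), infDist (g s) Y ≤ b₀)
    {a : ℝ} {x y : X} {g : ℝ → X} (hg : IsGeodesicSegment g x y) (hx : infDist x Y ≤ a)
    (hy : infDist y Y ≤ a) {s : ℝ} (hs : s ∈ Icc 0 (dist x y)) :
    infDist (g s) Y ≤ max b₀ (a + 1) + 2 * δ := by
  obtain ⟨x', hx', hxx'⟩ := (infDist_lt_iff hY).mp (hx.trans_lt (lt_add_one a))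
  obtain ⟨y', hy', hyy'⟩ := (infDist_lt_iff hY).mp (hy.trans_lt (lt_add_one a))
  obtain ⟨γ₁, h₁⟩ := hgeo x x'
  obtain ⟨γ₂, h₂⟩ := hgeo x' y'
  obtain ⟨γ₃, h₃⟩ := hgeo x y'
  obtain ⟨γ₄, h₄⟩ := hgeo y' y
  have hr₃ : ∀ t ∈ Icc 0 (dist x y'), infDist (γ₃ t) Y ≤ max b₀ (a + 1) + δ := fun t ht =>
    hthin.infDist_le_add h₁ h₂ h₃
      (fun t ht => (h₁.infDist_le_of_right_mem hx' ht).trans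
        (by linarith [le_max_right b₀ (a + 1)]))
      (fun t ht => (hb₀ x' hx' y' hy' γ₂ h₂ t ht).trans (le_max_left _ _)) ht
  have hgs := hthin.infDist_le_add h₃ h₄ hg hr₃
    (fun t ht => (h₄.infDist_le_of_left_mem hy' ht).trans
      (by linarith [le_max_right b₀ (a + 1), dist_comm y y'])) hs
  linarith

end

theorem stmt_14 {X : Type*} [MetricSpace X] (δ C : ℝ) (hδ : 0 ≤ δ) (hC : 0 ≤ C)
    (hgeo : ∀ x y : X, ∃ γ : ℝ → X, IsGeodesicSegment γ x y)
    (hthin : ThinTriangles X δ)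
    (Y : Set X) (P : X → X) (hPY : ∀ x, P x ∈ Y)
    (hQ1 : ∀ x x' : X, dist x x' ≤ 1 → dist (P x) (P x') ≤ C)
    (hQ2 : ∀ y ∈ Y, dist y (P y) ≤ C) :
    ∀ a : ℝ, 0 ≤ a → ∃ b : ℝ,
      ∀ x y : X, ∀ g : ℝ → X, IsGeodesicSegment g x y →
        Metric.infDist x Y ≤ a → Metric.infDist y Y ≤ a →
        ∀ s ∈ Set.Icc (0 : ℝ) (dist x y), dist (g s) (P (g s)) ≤ b := by
  intro a _
  obtain ⟨b₀, hb₀⟩ := exists_infDist_le_of_mem hδ hC hgeo hthin hPY hQ1 hQ2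
  refine ⟨(C + 1) * (max b₀ (a + 1) + 2 * δ + 1) + 2 * C, fun x y g hg hx hy s hs => ?_⟩
  have hY : Y.Nonempty := ⟨P x, hPY x⟩
  calc dist (g s) (P (g s)) ≤ (C + 1) * (infDist (g s) Y + 1) + 2 * C :=
        dist_proj_le hgeo hC hY hQ1 hQ2 (g s)
    _ ≤ (C + 1) * (max b₀ (a + 1) + 2 * δ + 1) + 2 * C := by
      gcongr
      exact infDist_le_of_endpoints hδ hgeo hthin hY hb₀ hg hx hy hs
end
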